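/- If H ∈ M_2(Z_p[[π,X]]) satisfies H ≡ Id mod π (i.e., H − Id ∈ π·M_2(Z_p[[π,X]])) and H·P(X) = P(X)·φ(H), then H = Id. -/

import Mathlib

open PowerSeries Filter Finset

noncomputable section

variable (p : ℕ) [Fact p.Prime]

/-- Substitution of a power series `g` (with zero constant coefficient in all our uses)
into a power series `f`: the coefficient of degree `j` of `f(g)` only involves the
monomials of `f` of degree `≤ j`. -/
def psSubst {A : Type*} [CommRing A] (g f : PowerSeries A) : PowerSeries A :=
  PowerSeries.mk fun j => ∑ i ∈ Finset.range (j + 1),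
    PowerSeries.coeff (R := A) i f * PowerSeries.coeff (R := A) j (g ^ i)

/-- The endomorphism `φ` of `A[[π]]`, substituting `(1+π)^p - 1` for `π`. -/
def phiA (A : Type*) [CommRing A] : PowerSeries A → PowerSeries A :=
  psSubst ((1 + PowerSeries.X) ^ p - 1)

/-- The binomial coefficient `binom(c, n)` for `c ∈ ℤ_p`, computed in `ℚ_p`. -/
def binomC (c : ℤ_[p]) (n : ℕ) : ℚ_[p] :=
  Polynomial.eval (c : ℚ_[p]) (descPochhammer ℚ_[p] n) / (n.factorial : ℚ_[p])

/-- The binomial power series `(1+π)^c = ∑_{n≥0} binom(c,n) π^n` for `c ∈ ℤ_p`. -/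
def onePlusPiPow (c : ℤ_[p]) : PowerSeries ℚ_[p] := PowerSeries.mk (binomC p c)

/-- The endomorphism `γ_c` of `ℚ_p[[π]]`, substituting `(1+π)^c - 1` for `π`. -/
def gammaQ (c : ℤ_[p]) : PowerSeries ℚ_[p] → PowerSeries ℚ_[p] :=
  psSubst (onePlusPiPow p c - 1)

/-- The partial products `∏_{n=0}^{N} φ^{2n+1}(q)/p` (whose limit is `λ₊`). -/
def partialPlus (q : PowerSeries ℚ_[p]) (N : ℕ) : PowerSeries ℚ_[p] :=
  ∏ n ∈ Finset.range (N + 1), (p : ℚ_[p])⁻¹ • (phiA p ℚ_[p])^[2 * n + 1] q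

/-- The partial products `∏_{n=0}^{N} φ^{2n}(q)/p` (whose limit is `λ₋`). -/
def partialMinus (q : PowerSeries ℚ_[p]) (N : ℕ) : PowerSeries ℚ_[p] :=
  ∏ n ∈ Finset.range (N + 1), (p : ℚ_[p])⁻¹ • (phiA p ℚ_[p])^[2 * n] q

/-- Convergence in `ℚ_p[[π]]` for the topology of coefficientwise convergence. -/
def CoeffTendsto (F : ℕ → PowerSeries ℚ_[p]) (L : PowerSeries ℚ_[p]) : Prop :=
  ∀ d : ℕ, Filter.Tendsto (fun N => PowerSeries.coeff (R := ℚ_[p]) d (F N))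
    Filter.atTop (nhds (PowerSeries.coeff (R := ℚ_[p]) d L))

/-- A power series with `ℚ_p` coefficients has all its coefficients in `ℤ_p`. -/
def IntSeries (f : PowerSeries ℚ_[p]) : Prop := ∀ n, ‖PowerSeries.coeff (R := ℚ_[p]) n f‖ ≤ 1

/-- Membership in the ring `R` of series `∑ a_i π^i` with `v_p(a_i) + i/(p-1) ≥ 0`,
expressed via norms: `‖a_i‖ ≤ p^{i/(p-1)}`. -/
def memR (f : PowerSeries ℚ_[p]) : Prop :=
  ∀ i : ℕ, ‖PowerSeries.coeff (R := ℚ_[p]) i f‖ ≤ (p : ℝ) ^ ((i : ℝ) / ((p : ℝ) - 1))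

/-- The series `p^m λ₋^{k-1} λ₊^{-(k-1)}`, where `m = ⌊(k-2)/(p-1)⌋`. -/
def zFull (k : ℕ) (lamPlus lamMinus : PowerSeries ℚ_[p]) : PowerSeries ℚ_[p] :=
  (p : PowerSeries ℚ_[p]) ^ ((k - 2) / (p - 1)) * lamMinus ^ (k - 1) * lamPlus⁻¹ ^ (k - 1)

/-- The truncation `z = z_0 + z_1 π + ⋯ + z_{k-2} π^{k-2}` of `p^m λ₋^{k-1} λ₊^{-(k-1)}`. -/
def zSeries (k : ℕ) (lamPlus lamMinus : PowerSeries ℚ_[p]) : PowerSeries ℚ_[p] :=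
  PowerSeries.mk fun i =>
    if i ≤ k - 2 then PowerSeries.coeff (R := ℚ_[p]) i (zFull p k lamPlus lamMinus) else 0

/-- The two-variable power series ring `ℚ_p[[π, X]]`, realized as `(ℚ_p[[π]])[[X]]`:
the inner variable is `π` and the outer variable is `X`. -/
abbrev PS2 := PowerSeries (PowerSeries ℚ_[p])

/-- `φ` extended to `ℚ_p[[π, X]]`, acting as before on `π` and trivially on `X`. -/
def phi2 : PS2 p → PS2 p := fun F =>
  PowerSeries.mk fun n => phiA p ℚ_[p] (PowerSeries.coeff (R := (PowerSeries ℚ_[p])) n F)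

/-- `γ_c` extended to `ℚ_p[[π, X]]`, acting as before on `π` and trivially on `X`. -/
def gamma2 (c : ℤ_[p]) : PS2 p → PS2 p := fun F =>
  PowerSeries.mk fun n => gammaQ p c (PowerSeries.coeff (R := (PowerSeries ℚ_[p])) n F)

/-- A two-variable power series has all its coefficients in `ℤ_p`,
i.e. lies in `ℤ_p[[π, X]]`. -/
def IntSeries2 (F : PS2 p) : Prop :=
  ∀ n j, ‖PowerSeries.coeff (R := ℚ_[p]) j (PowerSeries.coeff (R := (PowerSeries ℚ_[p])) n F)‖ ≤ 1

/-- The element `π` of `ℚ_p[[π, X]]`. -/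
def piVar : PS2 p := PowerSeries.C (R := (PowerSeries ℚ_[p])) PowerSeries.X

/-- The matrix `P(X)` with rows `(0, -1)` and `(q^{k-1}, X·z)`. -/
def Pmat (k : ℕ) (q z : PowerSeries ℚ_[p]) : Matrix (Fin 2) (Fin 2) (PS2 p) :=
  !![0, -1;
     PowerSeries.C (R := (PowerSeries ℚ_[p])) (q ^ (k - 1)),
       PowerSeries.X * PowerSeries.C (R := (PowerSeries ℚ_[p])) z]

/-- A matrix has entries in `ℤ_p[[π, X]]`. -/
def IntMat (H : Matrix (Fin 2) (Fin 2) (PS2 p)) : Prop := ∀ i j, IntSeries2 p (H i j)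

/-- A matrix is `≡ Id mod π`, i.e. `H - Id ∈ π · M₂(ℤ_p[[π, X]])`. -/
def ModPiId (H : Matrix (Fin 2) (Fin 2) (PS2 p)) : Prop :=
  ∃ H' : Matrix (Fin 2) (Fin 2) (PS2 p), IntMat p H' ∧ H = 1 + piVar p • H'

/-- The conditions satisfied by the matrix `G_c(X)`:
entries in `ℤ_p[[π,X]]`, `G ≡ Id mod π`, and `P(X)·φ(G) = G·γ_c(P(X))`. -/
def IsGmat (k : ℕ) (q z : PowerSeries ℚ_[p]) (c : ℤ_[p])
    (G : Matrix (Fin 2) (Fin 2) (PS2 p)) : Prop :=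
  IntMat p G ∧ ModPiId p G ∧
    Pmat p k q z * G.map (phi2 p) = G * (Pmat p k q z).map (gamma2 p c)

/-- The matrix `P₀` with rows `(0, -1)` and `(p^{k-1}, p^m X)`, `m = ⌊(k-2)/(p-1)⌋`. -/
def P0mat (k : ℕ) : Matrix (Fin 2) (Fin 2) (PowerSeries ℤ_[p]) :=
  !![0, -1;
     (p : PowerSeries ℤ_[p]) ^ (k - 1),
       (p : PowerSeries ℤ_[p]) ^ ((k - 2) / (p - 1)) * PowerSeries.X]

section Efield

variable (E : Type*) [NormedField E] [NormedAlgebra ℚ_[p] E] [IsUltrametricDist E]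

/-- The ring of integers `O_E` of `E`: the elements of norm at most `1`. -/
def ringOfInt : Subring E where
  carrier := {x : E | ‖x‖ ≤ 1}
  zero_mem' := by simp
  one_mem' := by simp
  add_mem' {a b} ha hb := le_trans (IsUltrametricDist.norm_add_le_max a b) (max_le ha hb)
  neg_mem' {a} ha := by simpa using ha
  mul_mem' {a b} ha hb := by
    have h := norm_mul a b
    simp only [Set.mem_setOf_eq] at *
    nlinarith [norm_nonneg a, norm_nonneg b]

/-- Evaluation `ev_α : ℚ_p[[π, X]] → E[[π]]` substituting `α` for `X`. -/
def evalX (α : E) (F : PS2 p) : PowerSeries E :=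
  PowerSeries.mk fun j =>
    ∑' n : ℕ, algebraMap ℚ_[p] E
      (PowerSeries.coeff (R := ℚ_[p]) j (PowerSeries.coeff (R := (PowerSeries ℚ_[p])) n F)) * α ^ n

/-- `γ_c` on `E[[π]]`: substitution of `(1+π)^c - 1` for `π` (coefficients mapped to `E`). -/
def gammaE (c : ℤ_[p]) : PowerSeries E → PowerSeries E :=
  psSubst ((onePlusPiPow p c).map (algebraMap ℚ_[p] E) - 1)

end Efield

end

/-!
Write `H = 1 + D`, so that `D · P = P · φ(D)`. If `X^N ∣ D`, cancelling `X^N` (which `φ` fixes)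
and reducing mod `X` gives `M · P̄ = P̄ · φ(M)` over `ℚ_p[[π]]`, where `M ≡ 0 mod π` is the
`X^N`-coefficient of `D` and `P̄ = !![0, -1; q^(k-1), 0]`. If moreover `π^N ∣ M` with `N ≥ 1`,
then, since `φ(π) = π q` with `q(0) = p`, cancelling `π^N` and reducing mod `π` turns this into
`M₀ · P̄₀ = p^N P̄₀ · M₀` for the `π^N`-coefficient `M₀` of `M`, where `P̄₀² = -p^(k-1)`.
Applying the relation twice gives `(1 - p^(2N)) M₀ = 0`, so `π^(N+1) ∣ M`. Hence `M = 0`, so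
`X^(N+1) ∣ D`, and finally `D = 0`.
-/

open PowerSeries

theorem eq_zero_of_mul_eq_smul_mul {K A : Type*} [Field K] [Ring A] [Algebra K A]
    {x m : A} {s t : K} (hx : x * x = s • 1) (hs : s ≠ 0) (ht : t ^ 2 ≠ 1)
    (h : m * x = t • (x * m)) : m = 0 := by
  have key : s • m = (t ^ 2 * s) • m := by
    calc s • m = m * (x * x) := by rw [hx, mul_smul_comm, mul_one]
      _ = t • (x * m * x) := by rw [← mul_assoc, h, smul_mul_assoc]
      _ = t • (x * (t • (x * m))) := by rw [mul_assoc, h]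
      _ = (t ^ 2 * s) • m := by
        rw [mul_smul_comm, ← mul_assoc, hx, smul_mul_assoc, one_mul, smul_smul, smul_smul]
        ring_nf
  have hne : s - t ^ 2 * s ≠ 0 := by
    rw [← one_sub_mul]
    exact mul_ne_zero (sub_ne_zero.mpr (Ne.symm ht)) hs
  simpa [hne] using (sub_smul s (t ^ 2 * s) m).trans (sub_eq_zero.mpr key)

theorem Matrix.exists_eq_smul_of_forall_dvd {m n R : Type*} [Semigroup R] {a : R}
    {M : Matrix m n R} (h : ∀ i j, a ∣ M i j) : ∃ M' : Matrix m n R, M = a • M' := by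
  choose f hf using h
  exact ⟨Matrix.of f, by ext i j; simp [hf]⟩

theorem PowerSeries.eq_zero_of_forall_X_pow_dvd {R : Type*} [CommSemiring R] {f : R⟦X⟧}
    (h : ∀ N, X ^ N ∣ f) : f = 0 := by
  ext m
  simpa using X_pow_dvd_iff.mp (h (m + 1)) m (Nat.lt_succ_self m)

theorem Matrix.eq_zero_of_X_pow_dvd_of_step {m n R : Type*} [CommRing R]
    {M : Matrix m n R⟦X⟧} {N₀ : ℕ} (h₀ : ∀ i j, X ^ N₀ ∣ M i j)
    (step : ∀ N, N₀ ≤ N → ∀ M' : Matrix m n R⟦X⟧, M = (X ^ N : R⟦X⟧) • M' →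
      M'.map constantCoeff = 0) :
    M = 0 := by
  have hdvd : ∀ N, N₀ ≤ N → ∀ i j, X ^ N ∣ M i j := by
    refine Nat.le_induction h₀ fun N hN ih i j => ?_
    obtain ⟨M', hM'⟩ := Matrix.exists_eq_smul_of_forall_dvd ih
    have hX : X ∣ M' i j := X_dvd_iff.mpr (congrFun₂ (step N hN M' hM') i j)
    rw [hM', pow_succ]
    exact mul_dvd_mul_left _ hX
  exact Matrix.ext fun i j => eq_zero_of_forall_X_pow_dvd fun N =>
    (pow_dvd_pow X (le_max_left N N₀)).trans (hdvd _ (le_max_right N N₀) i j)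

theorem Matrix.X_pow_smul_cancel {m n R : Type*} [CommRing R] [IsDomain R] {N : ℕ}
    {A B : Matrix m n R⟦X⟧} (h : (X ^ N : R⟦X⟧) • A = (X ^ N : R⟦X⟧) • B) : A = B :=
  smul_right_injective (m → n → R⟦X⟧) (pow_ne_zero N X_ne_zero) h

section TwistedCommutation

variable {K : Type*} [Field K] {ι : Type*} [Fintype ι] [DecidableEq ι]
  (φ : K⟦X⟧ →ₐ[K] K⟦X⟧) {q : K⟦X⟧} (hφ : φ X = X * q)
include hφ

theorem PowerSeries.constantCoeff_algHom_of_map_X_eq_X_mul (f : K⟦X⟧) :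
    constantCoeff (φ f) = constantCoeff f := by
  obtain ⟨g, hg⟩ : X ∣ f - C (constantCoeff f) := X_dvd_iff.mpr (by simp)
  rw [eq_add_of_sub_eq hg, map_add, map_mul, hφ, ← algebraMap_eq (R := K), AlgHom.commutes]
  simp

theorem Matrix.eq_zero_of_mul_eq_mul_map (hq : ∀ n ≠ 0, constantCoeff q ^ n ≠ 1)
    {x : Matrix ι ι K⟦X⟧} {s : K⟦X⟧} (hx : x * x = s • 1) (hs : constantCoeff s ≠ 0)
    {M : Matrix ι ι K⟦X⟧} (hM : ∀ i j, constantCoeff (M i j) = 0)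
    (h : M * x = x * M.map φ) : M = 0 := by
  refine Matrix.eq_zero_of_X_pow_dvd_of_step (N₀ := 1)
    (fun i j => by simpa [X_dvd_iff] using hM i j) fun N hN M' hM' => ?_
  have hmap : M.map φ = (X ^ N : K⟦X⟧) • (q ^ N • M'.map φ) := by
    rw [hM', Matrix.map_smul' _ _ _ (map_mul φ), map_pow, hφ, mul_pow, mul_smul]
  have h' : M' * x = q ^ N • (x * M'.map φ) := by
    apply Matrix.X_pow_smul_cancel (N := N)
    rw [← smul_mul_assoc, ← hM', h, hmap, mul_smul_comm, mul_smul_comm]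
  have h0 := congrArg (Matrix.map · constantCoeff) h'
  simp only [Matrix.map_mul, Matrix.map_smul' _ _ _ (map_mul constantCoeff), map_pow] at h0
  have hφ0 : (M'.map φ).map constantCoeff = M'.map constantCoeff := by
    rw [Matrix.map_map]
    exact congrArg M'.map (funext (constantCoeff_algHom_of_map_X_eq_X_mul φ hφ))
  have hx0 : x.map constantCoeff * x.map constantCoeff = constantCoeff s • 1 := by
    rw [← Matrix.map_mul, hx, Matrix.map_smul' _ _ _ (map_mul constantCoeff),
      Matrix.map_one _ (map_zero _) (map_one _)]
  rw [hφ0] at h0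
  refine eq_zero_of_mul_eq_smul_mul hx0 hs ?_ h0
  rw [← pow_mul]
  exact hq _ (by omega)

theorem Matrix.eq_zero_of_mul_eq_mul_map_map (hq : ∀ n ≠ 0, constantCoeff q ^ n ≠ 1)
    {P : Matrix ι ι K⟦X⟧⟦X⟧} {s : K⟦X⟧}
    (hP : P.map constantCoeff * P.map constantCoeff = s • 1) (hs : constantCoeff s ≠ 0)
    {D : Matrix ι ι K⟦X⟧⟦X⟧} (hD : ∀ i j n, constantCoeff (coeff n (D i j)) = 0)
    (h : D * P = P * D.map (PowerSeries.map φ)) : D = 0 := by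
  refine Matrix.eq_zero_of_X_pow_dvd_of_step (N₀ := 0) (by simp) fun N _ D' hD' => ?_
  have h' : D' * P = P * D'.map (PowerSeries.map φ) := by
    apply Matrix.X_pow_smul_cancel (N := N)
    rw [← smul_mul_assoc, ← hD', h, hD', Matrix.map_smul' _ _ _ (map_mul _), map_pow, map_X,
      mul_smul_comm]
  have h0 := congrArg (Matrix.map · constantCoeff) h'
  simp only [Matrix.map_mul, Matrix.map_map] at h0
  refine Matrix.eq_zero_of_mul_eq_mul_map φ hφ hq hP hs (fun i j => ?_) h0
  simpa [hD', coeff_X_pow_mul'] using hD i j N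

end TwistedCommutation

theorem psSubst_eq_subst {A : Type*} [CommRing A] {g : A⟦X⟧} (hg : constantCoeff g = 0)
    (f : A⟦X⟧) : psSubst g f = subst g f := by
  ext j
  rw [psSubst, coeff_mk, coeff_subst' (HasSubst.of_constantCoeff_zero' hg),
    finsum_eq_sum_of_support_subset (s := Finset.range (j + 1))]
  · simp only [smul_eq_mul]
  · intro d hd
    by_contra hdj
    have hXd : X ^ d ∣ g ^ d := pow_dvd_pow_of_dvd (X_dvd_iff.mpr hg) d
    simp only [Finset.coe_range, Set.mem_Iio, not_lt] at hdj
    exact hd (by dsimp only; rw [X_pow_dvd_iff.mp hXd j (by omega), smul_zero])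

section Frobenius

variable {p : ℕ} [Fact p.Prime]

variable (p) in
noncomputable def phiAlgHom : ℚ_[p]⟦X⟧ →ₐ[ℚ_[p]] ℚ_[p]⟦X⟧ :=
  substAlgHom (HasSubst.of_constantCoeff_zero' (a := ((1 + X) ^ p - 1 : ℚ_[p]⟦X⟧)) (by simp))

theorem coe_phiAlgHom : ⇑(phiAlgHom p) = phiA p ℚ_[p] := by
  funext f
  rw [phiAlgHom, coe_substAlgHom, phiA, psSubst_eq_subst (by simp)]

theorem phi2_eq_map : phi2 p = PowerSeries.map (phiAlgHom p : ℚ_[p]⟦X⟧ →+* ℚ_[p]⟦X⟧) := by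
  funext F
  ext n : 1
  simp [phi2, coe_phiAlgHom]

theorem phiAlgHom_X {q : ℚ_[p]⟦X⟧} (hq : X * q = (1 + X) ^ p - 1) : phiAlgHom p X = X * q := by
  rw [phiAlgHom, substAlgHom_X, hq]

theorem constantCoeff_eq_of_X_mul_eq {q : ℚ_[p]⟦X⟧} (hq : X * q = (1 + X) ^ p - 1) :
    constantCoeff q = p := by
  have h := congrArg (coeff 1) hq
  rw [coeff_succ_X_mul, coeff_zero_eq_constantCoeff_apply] at h
  rw [h, map_sub, coeff_one, if_neg one_ne_zero, sub_zero, add_comm, ← Polynomial.coe_X,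
    ← Polynomial.coe_one, ← Polynomial.coe_add, ← Polynomial.coe_pow, Polynomial.coeff_coe,
    Polynomial.coeff_X_add_one_pow, Nat.choose_one_right]

theorem constantCoeff_pow_ne_one_of_X_mul_eq {q : ℚ_[p]⟦X⟧} (hq : X * q = (1 + X) ^ p - 1)
    {n : ℕ} (hn : n ≠ 0) : constantCoeff q ^ n ≠ 1 := by
  rw [constantCoeff_eq_of_X_mul_eq hq]
  exact_mod_cast fun h => (Nat.pow_eq_one.mp h).elim (Fact.out : p.Prime).one_lt.ne' hn

theorem Pmat_map_constantCoeff_mul_self (k : ℕ) (q z : ℚ_[p]⟦X⟧) :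
    (Pmat p k q z).map constantCoeff * (Pmat p k q z).map constantCoeff = (-q ^ (k - 1)) • 1 := by
  ext i j
  fin_cases i <;> fin_cases j <;> simp [Pmat, Matrix.mul_apply]

theorem ModPiId.constantCoeff_coeff_sub_one {H : Matrix (Fin 2) (Fin 2) (PS2 p)}
    (hH : ModPiId p H) (i j : Fin 2) (n : ℕ) : constantCoeff (coeff n ((H - 1) i j)) = 0 := by
  obtain ⟨H', -, rfl⟩ := hH
  simp [piVar]

end Frobenius

theorem statement10_general (p : ℕ) [Fact p.Prime] (k : ℕ)
    (q : PowerSeries ℚ_[p]) (hq : PowerSeries.X * q = (1 + PowerSeries.X) ^ p - 1)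
    (lamPlus lamMinus : PowerSeries ℚ_[p])
    (H : Matrix (Fin 2) (Fin 2) (PS2 p))
    (hmod : ModPiId p H)
    (heq : H * Pmat p k q (zSeries p k lamPlus lamMinus)
        = Pmat p k q (zSeries p k lamPlus lamMinus) * H.map (phi2 p)) :
    H = 1 := by
  set P := Pmat p k q (zSeries p k lamPlus lamMinus)
  have hs : constantCoeff (-q ^ (k - 1)) ≠ 0 := by
    simp [constantCoeff_eq_of_X_mul_eq hq, (Fact.out : p.Prime).ne_zero]
  have hD : (H - 1) * P = P * (H - 1).map (PowerSeries.map (phiAlgHom p)) := by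
    have hmap := map_sub (PowerSeries.map (phiAlgHom p : ℚ_[p]⟦X⟧ →+* ℚ_[p]⟦X⟧)).mapMatrix H 1
    rw [map_one, RingHom.mapMatrix_apply, RingHom.mapMatrix_apply] at hmap
    rw [hmap, sub_mul, mul_sub, heq, phi2_eq_map, one_mul, mul_one]
  exact sub_eq_zero.mp <| Matrix.eq_zero_of_mul_eq_mul_map_map _ (phiAlgHom_X hq)
    (fun _ => constantCoeff_pow_ne_one_of_X_mul_eq hq) (Pmat_map_constantCoeff_mul_self k q _) hs
    hmod.constantCoeff_coeff_sub_one hD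

theorem statement10 (p : ℕ) [Fact p.Prime] (k : ℕ) (hk : 2 ≤ k)
    (q : PowerSeries ℚ_[p]) (hq : PowerSeries.X * q = (1 + PowerSeries.X) ^ p - 1)
    (lamPlus lamMinus : PowerSeries ℚ_[p])
    (hplus : CoeffTendsto p (partialPlus p q) lamPlus)
    (hminus : CoeffTendsto p (partialMinus p q) lamMinus)
    (H : Matrix (Fin 2) (Fin 2) (PS2 p))
    (hint : IntMat p H) (hmod : ModPiId p H)
    (heq : H * Pmat p k q (zSeries p k lamPlus lamMinus)
        = Pmat p k q (zSeries p k lamPlus lamMinus) * H.map (phi2 p)) :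
    H = 1 :=
  statement10_general p k q hq lamPlus lamMinus H hmod heq
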